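/- arXiv:math/0612216 — 5 statements merged into one kernel-verified Lean document; each statement's English description precedes it below -/
import Mathlib

section
/- For every fixed complex number z, the limit of E_q((1−q)z) = ∑_{k=0}^∞ q^{k(k−1)/2} (1−q)^k z^k / (q;q)_k as q tends to 1 from the left (q ∈ (0,1), q → 1⁻) equals e^z. -/
open Filter Finset Topology Nat

/-!
Writing `1 - q ^ (j + 1) = (1 - q) [j + 1]_q` with the `q`-integer
`[n]_q = 1 + q + ⋯ + q ^ (n - 1)`, the factor `(1 - q) ^ k` cancels and the `k`-th term becomes
`q ^ (k(k-1)/2) z ^ k / [k]_q!` (with `[k]_q! = qFactorial q k`), which tends to `z ^ k / k!` as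
`q → 1`. Since `[j + 1]_q ≥ (j + 1) q ^ j` for `0 < q < 1` and `∑_{j < k} j = k(k-1)/2`, one has
`[k]_q! ≥ k! q ^ (k(k-1)/2)`, so every term is dominated by `‖z‖ ^ k / k!` and Tannery's theorem
lets the limit pass through the sum.
-/

def qFactorial {R : Type*} [CommSemiring R] (q : R) (k : ℕ) : R :=
  ∏ j ∈ range k, ∑ i ∈ range (j + 1), q ^ i

section qFactorial

variable {R S : Type*}

theorem map_qFactorial [CommSemiring R] [CommSemiring S] (f : R →+* S) (q : R) (k : ℕ) :
    f (qFactorial q k) = qFactorial (f q) k := by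
  simp only [qFactorial, map_prod, map_sum, map_pow]

theorem qFactorial_one [CommSemiring R] (k : ℕ) : qFactorial (1 : R) k = k ! := by
  simp only [qFactorial, one_pow, sum_const, card_range, nsmul_eq_mul, mul_one]
  rw [← prod_range_add_one_eq_factorial]
  push_cast
  rfl

theorem prod_one_sub_pow_succ [CommRing R] (q : R) (k : ℕ) :
    ∏ j ∈ range k, (1 - q ^ (j + 1)) = (1 - q) ^ k * qFactorial q k := by
  simp only [qFactorial, ← mul_neg_geom_sum, prod_mul_distrib, prod_const, card_range]

theorem factorial_mul_pow_le_qFactorial [CommSemiring R] [PartialOrder R] [IsStrictOrderedRing R]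
    {q : R} (hq₀ : 0 ≤ q) (hq₁ : q ≤ 1) (k : ℕ) :
    k ! * q ^ (k * (k - 1) / 2) ≤ qFactorial q k := by
  have h_term (j : ℕ) : ((j : R) + 1) * q ^ j ≤ ∑ i ∈ range (j + 1), q ^ i := by
    simpa [add_comm] using card_nsmul_le_sum (range (j + 1)) (q ^ ·) (q ^ j)
      fun i hi ↦ pow_le_pow_of_le_one hq₀ hq₁ (Nat.lt_succ_iff.mp (mem_range.mp hi))
  calc (k ! : R) * q ^ (k * (k - 1) / 2) = ∏ j ∈ range k, ((j : R) + 1) * q ^ j := by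
        rw [prod_mul_distrib, prod_pow_eq_pow_sum, sum_range_id,
          ← prod_range_add_one_eq_factorial]
        push_cast
        rfl
    _ ≤ qFactorial q k :=
        prod_le_prod (fun j _ ↦ by positivity) fun j _ ↦ h_term j

theorem qFactorial_pos [CommSemiring R] [PartialOrder R] [IsStrictOrderedRing R]
    {q : R} (hq : 0 ≤ q) (k : ℕ) : 0 < qFactorial q k :=
  prod_pos fun j _ ↦ sum_pos' (fun i _ ↦ pow_nonneg hq i) ⟨0, by simp⟩

end qFactorial

/-- The `k`-th term of `E_q((1 - q) z)`. -/
def qExpTerm {K : Type*} [Field K] (q z : K) (k : ℕ) : K :=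
  q ^ (k * (k - 1) / 2) * (1 - q) ^ k * z ^ k / ∏ j ∈ range k, (1 - q ^ (j + 1))

theorem qExpTerm_eq {K : Type*} [Field K] {q : K} (hq : q ≠ 1) (z : K) (k : ℕ) :
    qExpTerm q z k = q ^ (k * (k - 1) / 2) * z ^ k / qFactorial q k := by
  rw [qExpTerm, prod_one_sub_pow_succ, mul_right_comm _ _ (z ^ k), mul_comm _ ((1 - q) ^ k),
    mul_div_mul_left _ _ (pow_ne_zero k (sub_ne_zero.mpr hq.symm))]

theorem tendsto_qExpTerm (z : ℂ) (k : ℕ) :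
    Tendsto (fun q : ℝ ↦ qExpTerm (q : ℂ) z k) (𝓝[Set.Ioo 0 1] 1) (𝓝 (z ^ k / k !)) := by
  have h_cont : ContinuousAt
      (fun q : ℝ ↦ (q : ℂ) ^ (k * (k - 1) / 2) * z ^ k / qFactorial (q : ℂ) k) 1 := by
    have h_ne : qFactorial ((1 : ℝ) : ℂ) k ≠ 0 := by simp [qFactorial_one, factorial_ne_zero]
    unfold qFactorial at h_ne ⊢
    fun_prop (disch := exact h_ne)
  have h_lim := h_cont.tendsto
  simp only [Complex.ofReal_one, one_pow, one_mul, qFactorial_one] at h_lim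
  refine (h_lim.mono_left nhdsWithin_le_nhds).congr' ?_
  filter_upwards [self_mem_nhdsWithin] with q hq
  exact (qExpTerm_eq (by exact_mod_cast hq.2.ne) z k).symm

theorem norm_qExpTerm_le (z : ℂ) {q : ℝ} (hq : q ∈ Set.Ioo 0 1) (k : ℕ) :
    ‖qExpTerm (q : ℂ) z k‖ ≤ ‖z‖ ^ k / k ! := by
  have h_pos := qFactorial_pos hq.1.le k
  have h_cast : qFactorial (q : ℂ) k = qFactorial q k :=
    (map_qFactorial Complex.ofRealHom q k).symm
  rw [qExpTerm_eq (by exact_mod_cast hq.2.ne), h_cast, norm_div, norm_mul, norm_pow, norm_pow,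
    Complex.norm_real, Complex.norm_real, Real.norm_of_nonneg hq.1.le, Real.norm_of_nonneg h_pos.le,
    div_le_div_iff₀ h_pos (by positivity)]
  calc q ^ (k * (k - 1) / 2) * ‖z‖ ^ k * k ! = ‖z‖ ^ k * (k ! * q ^ (k * (k - 1) / 2)) := by ring
    _ ≤ ‖z‖ ^ k * qFactorial q k := by
        gcongr; exact factorial_mul_pow_le_qFactorial hq.1.le hq.2.le k

/-- For every fixed `z : ℂ`, the limit of
`E_q((1-q)z) = ∑_{k=0}^∞ q^{k(k-1)/2} (1-q)^k z^k / (q;q)_k` as `q → 1⁻` with `q ∈ (0,1)`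
equals `e^z`. -/
theorem stmt4 (z : ℂ) :
    Filter.Tendsto
      (fun q : ℝ => ∑' k : ℕ, (q : ℂ) ^ (k * (k - 1) / 2) * ((1 : ℂ) - (q : ℂ)) ^ k * z ^ k /
          ∏ j ∈ Finset.range k, (1 - (q : ℂ) ^ (j + 1)))
      (nhdsWithin 1 (Set.Ioo 0 1)) (nhds (Complex.exp z)) := by
  rw [Complex.exp_eq_exp_ℂ, NormedSpace.exp_eq_tsum_div]
  exact tendsto_tsum_of_dominated_convergence (Real.summable_pow_div_factorial ‖z‖)
    (tendsto_qExpTerm z) (eventually_nhdsWithin_of_forall fun q hq k ↦ norm_qExpTerm_le z hq k)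
end

section
/- Let 0 < q < 1 and let z be a nonzero complex number. Then |E_q(z)| ≤ exp( −(log|z/q|)² / (2 log q) ) / (q^{1/2}; q)_∞, where (q^{1/2};q)_∞ = ∏_{k=0}^∞ (1 − q^{k+1/2}). (Note log q < 0, so the exponent is nonnegative.) -/
/-!
Write `r = ‖z‖`. Completing the square in `k` gives
`q ^ (k choose 2) * r ^ k ≤ exp (-(log (r / q))² / (2 log q)) * (√q) ^ k`,
so `|E_q(z)|` is at most that exponential times `∑ x ^ k / (q;q)_k` with `x = √q`. By Euler this
series equals `1 / (x;q)_∞`; we only need the bound `≤`, which follows from the truncated functional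
equation `S_{n+1}(q y) = (1 - y) S_{n+1}(y) + y ^ (n + 1) / (q;q)_n` for the partial sums
`S_n(y) = ∑_{k<n} y ^ k / (q;q)_k`: iterating
`(1 - y) S_n(y) ≤ S_n(q y)` gives `S_n(x) (x;q)_m ≤ S_n(q ^ m x)`, and the right-hand side tends
to `S_n(0) ≤ 1` as `m → ∞`.
-/

open Finset Filter

def qPochhammer {R : Type*} [CommRing R] (a q : R) (n : ℕ) : R :=
  ∏ j ∈ range n, (1 - a * q ^ j)

section CommRing
variable {R : Type*} [CommRing R] (a q : R)

lemma qPochhammer_succ (n : ℕ) :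
    qPochhammer a q (n + 1) = qPochhammer a q n * (1 - a * q ^ n) :=
  prod_range_succ _ n

lemma qPochhammer_self (n : ℕ) : qPochhammer q q n = ∏ j ∈ range n, (1 - q ^ (j + 1)) := by
  simp only [qPochhammer, pow_succ']

end CommRing

section Field
variable {K : Type*} [Field K] {q : K}

lemma qPochhammer_self_ne_zero (hq : ∀ j : ℕ, q ^ (j + 1) ≠ 1) (n : ℕ) :
    qPochhammer q q n ≠ 0 := by
  rw [qPochhammer_self]
  exact prod_ne_zero_iff.2 fun j _ => sub_ne_zero.2 (hq j).symm

def eulerSum (q y : K) (n : ℕ) : K := ∑ k ∈ range n, y ^ k / qPochhammer q q k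

lemma eulerSum_q_mul (hq : ∀ j : ℕ, q ^ (j + 1) ≠ 1) (y : K) (n : ℕ) :
    eulerSum q (q * y) (n + 1) =
      (1 - y) * eulerSum q y (n + 1) + y ^ (n + 1) / qPochhammer q q n := by
  induction n with
  | zero => simp [eulerSum, qPochhammer]
  | succ n ih =>
    rw [eulerSum, sum_range_succ, ← eulerSum, ih, eulerSum, eulerSum, sum_range_succ _ (n + 1),
      qPochhammer_succ]
    have h₁ := qPochhammer_self_ne_zero hq n
    have h₂ : 1 - q * q ^ n ≠ 0 := by rw [← pow_succ']; exact sub_ne_zero.2 (hq n).symm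
    field_simp
    ring

end Field

section Real
variable {q x : ℝ}

lemma one_sub_mul_pow_pos (hq₀ : 0 ≤ q) (hq₁ : q ≤ 1) (hx₀ : 0 ≤ x) (hx₁ : x < 1) (j : ℕ) :
    0 < 1 - x * q ^ j := by
  have : x * q ^ j ≤ x := mul_le_of_le_one_right hx₀ (pow_le_one₀ hq₀ hq₁)
  linarith

lemma qPochhammer_pos (hq₀ : 0 ≤ q) (hq₁ : q ≤ 1) (hx₀ : 0 ≤ x) (hx₁ : x < 1) (n : ℕ) :
    0 < qPochhammer x q n :=
  prod_pos fun j _ => one_sub_mul_pow_pos hq₀ hq₁ hx₀ hx₁ j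

lemma one_sub_mul_eulerSum_le (hq₀ : 0 ≤ q) (hq₁ : q < 1) {y : ℝ} (hy : 0 ≤ y) (n : ℕ) :
    (1 - y) * eulerSum q y n ≤ eulerSum q (q * y) n := by
  cases n with
  | zero => simp [eulerSum]
  | succ n =>
    rw [eulerSum_q_mul fun j => (pow_lt_one₀ hq₀ hq₁ j.succ_ne_zero).ne]
    have := qPochhammer_pos hq₀ hq₁.le hq₀ hq₁ n
    have : 0 ≤ y ^ (n + 1) / qPochhammer q q n := by positivity
    linarith

lemma eulerSum_mul_qPochhammer_le (hq₀ : 0 ≤ q) (hq₁ : q < 1) (hx₀ : 0 ≤ x) (hx₁ : x < 1)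
    (n m : ℕ) : eulerSum q x n * qPochhammer x q m ≤ eulerSum q (q ^ m * x) n := by
  induction m with
  | zero => simp [qPochhammer]
  | succ m ih =>
    calc eulerSum q x n * qPochhammer x q (m + 1)
        = (1 - x * q ^ m) * (eulerSum q x n * qPochhammer x q m) := by
          rw [qPochhammer_succ]; ring
      _ ≤ (1 - x * q ^ m) * eulerSum q (q ^ m * x) n :=
          mul_le_mul_of_nonneg_left ih (one_sub_mul_pow_pos hq₀ hq₁.le hx₀ hx₁ m).le
      _ ≤ eulerSum q (q ^ (m + 1) * x) n := by
          rw [mul_comm x, pow_succ', mul_assoc]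
          exact one_sub_mul_eulerSum_le hq₀ hq₁ (by positivity) n

lemma eulerSum_zero_le_one (q : ℝ) (n : ℕ) : eulerSum q 0 n ≤ 1 := by
  cases n with
  | zero => simp [eulerSum]
  | succ n => simp [eulerSum, sum_range_succ', qPochhammer]

lemma summable_log_one_sub_mul_pow (hq₀ : 0 ≤ q) (hq₁ : q < 1) :
    Summable fun k : ℕ => Real.log (1 - x * q ^ k) := by
  simpa [← sub_eq_add_neg] using Real.summable_log_one_add_of_summable
    ((summable_geometric_of_lt_one hq₀ hq₁).mul_left x).neg

lemma hasProd_one_sub_mul_pow (hq₀ : 0 ≤ q) (hq₁ : q < 1) (hx₀ : 0 ≤ x) (hx₁ : x < 1) :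
    HasProd (fun k : ℕ => 1 - x * q ^ k) (Real.exp (∑' k : ℕ, Real.log (1 - x * q ^ k))) :=
  Real.hasProd_of_hasSum_log (one_sub_mul_pow_pos hq₀ hq₁.le hx₀ hx₁)
    (summable_log_one_sub_mul_pow hq₀ hq₁).hasSum

lemma eulerSum_le_inv_tprod (hq₀ : 0 ≤ q) (hq₁ : q < 1) (hx₀ : 0 ≤ x) (hx₁ : x < 1) (n : ℕ) :
    eulerSum q x n ≤ (∏' k : ℕ, (1 - x * q ^ k))⁻¹ := by
  have hP := hasProd_one_sub_mul_pow hq₀ hq₁ hx₀ hx₁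
  rw [hP.tprod_eq, ← one_div, le_div_iff₀ (Real.exp_pos _)]
  have hlim : Tendsto (fun m => eulerSum q (q ^ m * x) n) atTop (nhds (eulerSum q 0 n)) := by
    have : Continuous fun y => eulerSum q y n := by unfold eulerSum; fun_prop
    refine this.tendsto 0 |>.comp ?_
    simpa using (tendsto_pow_atTop_nhds_zero_of_lt_one hq₀ hq₁).mul_const x
  refine (le_of_tendsto_of_tendsto' (hP.tendsto_prod_nat.const_mul _) hlim fun m => ?_).trans
    (eulerSum_zero_le_one q n)
  exact eulerSum_mul_qPochhammer_le hq₀ hq₁ hx₀ hx₁ n m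

lemma summable_pow_div_qPochhammer (hq₀ : 0 ≤ q) (hq₁ : q < 1) (hx₀ : 0 ≤ x) (hx₁ : x < 1) :
    Summable fun k : ℕ => x ^ k / qPochhammer q q k :=
  summable_of_sum_range_le (fun k => div_nonneg (pow_nonneg hx₀ k)
    (qPochhammer_pos hq₀ hq₁.le hq₀ hq₁ k).le) (eulerSum_le_inv_tprod hq₀ hq₁ hx₀ hx₁)

lemma tsum_pow_div_qPochhammer_le (hq₀ : 0 ≤ q) (hq₁ : q < 1) (hx₀ : 0 ≤ x) (hx₁ : x < 1) :
    ∑' k : ℕ, x ^ k / qPochhammer q q k ≤ (∏' k : ℕ, (1 - x * q ^ k))⁻¹ :=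
  Real.tsum_le_of_sum_range_le (fun k => div_nonneg (pow_nonneg hx₀ k)
    (qPochhammer_pos hq₀ hq₁.le hq₀ hq₁ k).le) (eulerSum_le_inv_tprod hq₀ hq₁ hx₀ hx₁)

lemma mul_sub_one_div_two_mul_add_mul_le {a : ℝ} (ha : a < 0) (b t : ℝ) :
    t * (t - 1) / 2 * a + t * b ≤ -(b - a) ^ 2 / (2 * a) + t * (a / 2) := by
  have hsquare : -(b - a) ^ 2 / (2 * a) + t * (a / 2) - (t * (t - 1) / 2 * a + t * b)
      = (b - a + t * a) ^ 2 / (-(2 * a)) := by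
    have : a ≠ 0 := ha.ne
    field_simp
    ring
  have : 0 ≤ (b - a + t * a) ^ 2 / (-(2 * a)) := div_nonneg (sq_nonneg _) (by linarith)
  linarith

lemma pow_choose_two_mul_pow_le (hq₀ : 0 < q) (hq₁ : q < 1) {r : ℝ} (hr : 0 < r) (k : ℕ) :
    q ^ k.choose 2 * r ^ k ≤ Real.exp (-Real.log (r / q) ^ 2 / (2 * Real.log q)) * √q ^ k := by
  rw [← Real.log_le_log_iff (by positivity) (by positivity), Real.log_mul (by positivity)
    (by positivity), Real.log_mul (by positivity) (by positivity), Real.log_pow, Real.log_pow,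
    Real.log_pow, Real.log_exp, Real.log_sqrt hq₀.le, Nat.cast_choose_two,
    Real.log_div hr.ne' hq₀.ne']
  exact mul_sub_one_div_two_mul_add_mul_le (Real.log_neg hq₀ hq₁) _ _

lemma norm_pow_mul_pow_div_prod (hq₀ : 0 ≤ q) (hq₁ : q < 1) (z : ℂ) (k : ℕ) :
    ‖(q : ℂ) ^ (k * (k - 1) / 2) * z ^ k / ∏ j ∈ range k, (1 - (q : ℂ) ^ (j + 1))‖
      = q ^ k.choose 2 * ‖z‖ ^ k / qPochhammer q q k := by
  have : ∏ j ∈ range k, (1 - (q : ℂ) ^ (j + 1)) = ((qPochhammer q q k : ℝ) : ℂ) := by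
    rw [qPochhammer_self]; push_cast; rfl
  rw [this, norm_div, norm_mul, norm_pow, norm_pow, Complex.norm_real, Complex.norm_real,
    Real.norm_of_nonneg hq₀, Real.norm_of_nonneg (qPochhammer_pos hq₀ hq₁.le hq₀ hq₁ k).le,
    Nat.choose_two_right]

end Real

/-- For `0 < q < 1` and nonzero `z : ℂ`,
`|E_q(z)| ≤ exp(-(log|z/q|)²/(2 log q)) / (q^{1/2};q)_∞`,
where `(q^{1/2};q)_∞ = ∏_{k=0}^∞ (1 - q^{k+1/2}) = ∏_{k=0}^∞ (1 - √q · q^k)`. -/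
theorem stmt5 (q : ℝ) (hq0 : 0 < q) (hq1 : q < 1) (z : ℂ) (hz : z ≠ 0) :
    ‖∑' k : ℕ, (q : ℂ) ^ (k * (k - 1) / 2) * z ^ k /
        ∏ j ∈ Finset.range k, (1 - (q : ℂ) ^ (j + 1))‖ ≤
      Real.exp (-(Real.log (‖z‖ / q)) ^ 2 / (2 * Real.log q)) /
        ∏' k : ℕ, (1 - Real.sqrt q * q ^ k) := by
  have hx₀ : 0 ≤ √q := Real.sqrt_nonneg q
  have hx₁ : √q < 1 := (Real.sqrt_lt' one_pos).2 (by rwa [one_pow])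
  set M := Real.exp (-(Real.log (‖z‖ / q)) ^ 2 / (2 * Real.log q))
  have hterm (k : ℕ) : ‖(q : ℂ) ^ (k * (k - 1) / 2) * z ^ k /
      ∏ j ∈ Finset.range k, (1 - (q : ℂ) ^ (j + 1))‖ ≤ M * (√q ^ k / qPochhammer q q k) := by
    rw [norm_pow_mul_pow_div_prod hq0.le hq1, ← mul_div_assoc]
    exact div_le_div_of_nonneg_right (pow_choose_two_mul_pow_le hq0 hq1 (norm_pos_iff.2 hz) k)
      (qPochhammer_pos hq0.le hq1.le hq0.le hq1 k).le
  calc _ ≤ M * ∑' k : ℕ, √q ^ k / qPochhammer q q k :=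
        tsum_of_norm_bounded
          ((summable_pow_div_qPochhammer hq0.le hq1 hx₀ hx₁).hasSum.mul_left M) hterm
    _ ≤ M * (∏' k : ℕ, (1 - √q * q ^ k))⁻¹ := mul_le_mul_of_nonneg_left
        (tsum_pow_div_qPochhammer_le hq0.le hq1 hx₀ hx₁) (Real.exp_pos _).le
    _ = _ := (div_eq_mul_inv _ _).symm
end

section
/- Let 0 < q < 1 and let z be a nonzero complex number. Then |θ₃(z;q)| ≤ ( (q²;q²)_∞ / ( (q;q²)_∞² · q^{1/2} ) ) · exp( −(log|z|)² / (2 log q) ), where (q²;q²)_∞ = ∏_{k=0}^∞ (1 − q^{2k+2}) and (q;q²)_∞ = ∏_{k=0}^∞ (1 − q^{2k+1}). (Note log q < 0, so the exponent is nonnegative.) -/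
/-!
Completing the square in the exponent gives `q^{k²} |z|^k ≤ exp(-(log|z|)²/(2 log q)) · (√q)^{k²}`,
so `|θ₃(z;q)|` is at most that exponential times `θ₃(1;√q)`. Comparing with a geometric series,
`θ₃(1;√q) ≤ 1 + 2√q/(1-q) ≤ (1+q)/((1-q)(1-q³)√q)`, and the last quotient is dominated by
`(q²;q²)_∞ / ((q;q²)_∞² √q)` because `(q;q²)_∞ ≤ (1-q)(1-q³)` and `(1+q)(q;q²)_∞ ≤ (q²;q²)_∞`;
both product inequalities follow factorwise after taking logarithms.
-/

open Real

section OneSubProducts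

variable {ι : Type*} {u v : ι → ℝ}

lemma summable_log_one_sub (hu : Summable u) : Summable fun i ↦ log (1 - u i) := by
  simpa [sub_eq_add_neg] using Real.summable_log_one_add_of_summable hu.neg

lemma tprod_one_sub_eq_exp (hu : Summable u) (hu1 : ∀ i, u i < 1) :
    ∏' i, (1 - u i) = exp (∑' i, log (1 - u i)) :=
  (rexp_tsum_eq_tprod (fun i ↦ sub_pos.2 (hu1 i)) (summable_log_one_sub hu)).symm

lemma tprod_one_sub_pos (hu : Summable u) (hu1 : ∀ i, u i < 1) : 0 < ∏' i, (1 - u i) := by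
  rw [tprod_one_sub_eq_exp hu hu1]
  exact exp_pos _

lemma prod_mul_tprod_one_sub_le (hu : Summable u) (hv : Summable v) (hu1 : ∀ i, u i < 1)
    (hvu : ∀ i, v i ≤ u i) (s : Finset ι) :
    (∏ i ∈ s, (1 - v i)) * ∏' i, (1 - u i) ≤ (∏ i ∈ s, (1 - u i)) * ∏' i, (1 - v i) := by
  have hv1 i : v i < 1 := (hvu i).trans_lt (hu1 i)
  have hlog i : log (1 - u i) ≤ log (1 - v i) :=
    log_le_log (sub_pos.2 (hu1 i)) (by linarith [hvu i])
  have hsum := ((summable_log_one_sub hv).sub (summable_log_one_sub hu)).sum_le_tsum s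
    (fun i _ ↦ sub_nonneg.2 (hlog i))
  rw [Finset.sum_sub_distrib, (summable_log_one_sub hv).tsum_sub (summable_log_one_sub hu)] at hsum
  have hprod (w : ι → ℝ) (hw : ∀ i, w i < 1) :
      ∏ i ∈ s, (1 - w i) = exp (∑ i ∈ s, log (1 - w i)) := by
    rw [exp_sum]
    exact Finset.prod_congr rfl fun i _ ↦ (exp_log (sub_pos.2 (hw i))).symm
  rw [hprod u hu1, hprod v hv1, tprod_one_sub_eq_exp hu hu1, tprod_one_sub_eq_exp hv hv1,
    ← exp_add, ← exp_add, exp_le_exp]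
  linarith

lemma tprod_one_sub_le_prod (hu : Summable u) (hu0 : ∀ i, 0 ≤ u i) (hu1 : ∀ i, u i < 1)
    (s : Finset ι) : ∏' i, (1 - u i) ≤ ∏ i ∈ s, (1 - u i) := by
  simpa using prod_mul_tprod_one_sub_le hu summable_zero hu1 hu0 s

end OneSubProducts

lemma one_add_div_le_tprod_div_sq {q : ℝ} (hq0 : 0 < q) (hq1 : q < 1) :
    (1 + q) / ((1 - q) * (1 - q ^ 3)) ≤
      (∏' k : ℕ, (1 - q ^ (2 * k + 2))) / (∏' k : ℕ, (1 - q ^ (2 * k + 1))) ^ 2 := by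
  have hgeom (m : ℕ) : Summable fun k : ℕ ↦ q ^ (2 * k + m) :=
    (summable_geometric_of_lt_one hq0.le hq1).comp_injective fun a b h ↦ by simpa using h
  have hodd (k : ℕ) : q ^ (2 * k + 1) < 1 := pow_lt_one₀ hq0.le hq1 (by omega)
  set P₁ := ∏' k : ℕ, (1 - q ^ (2 * k + 1))
  set P₂ := ∏' k : ℕ, (1 - q ^ (2 * k + 2))
  have hP₁pos : 0 < P₁ := tprod_one_sub_pos (hgeom 1) hodd
  have hP₁le : P₁ ≤ (1 - q) * (1 - q ^ 3) := by
    simpa [Finset.prod_range_succ] using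
      tprod_one_sub_le_prod (hgeom 1) (fun k ↦ by positivity) hodd (Finset.range 2)
  have hP₂ge : (1 + q) * P₁ ≤ P₂ := by
    have h := prod_mul_tprod_one_sub_le (hgeom 1) (hgeom 2) hodd
      (fun k ↦ pow_le_pow_of_le_one hq0.le hq1.le (by omega)) {0}
    simp only [Finset.prod_singleton, mul_zero, zero_add, pow_one] at h
    rw [show 1 - q ^ 2 = (1 - q) * (1 + q) by ring, mul_assoc] at h
    exact le_of_mul_le_mul_left h (by linarith)
  calc (1 + q) / ((1 - q) * (1 - q ^ 3)) ≤ (1 + q) / P₁ := by gcongr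
    _ = (1 + q) * P₁ / P₁ ^ 2 := by field_simp
    _ ≤ P₂ / P₁ ^ 2 := by gcongr

section GaussianSum

variable {s : ℝ}

lemma pow_add_one_sq_le (hs0 : 0 ≤ s) (hs1 : s ≤ 1) (n : ℕ) :
    s ^ ((n + 1) ^ 2) ≤ s * (s ^ 2) ^ n := by
  rw [← pow_mul, ← pow_succ']
  exact pow_le_pow_of_le_one hs0 hs1 (by nlinarith)

lemma summable_pow_add_one_sq (hs0 : 0 ≤ s) (hs1 : s < 1) :
    Summable fun n : ℕ ↦ s ^ ((n + 1) ^ 2) :=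
  (summable_geometric_of_lt_one hs0 hs1).comp_injective fun a b h ↦ by simpa using h

lemma tsum_pow_add_one_sq_le (hs0 : 0 ≤ s) (hs1 : s < 1) :
    ∑' n : ℕ, s ^ ((n + 1) ^ 2) ≤ s / (1 - s ^ 2) := by
  have hs2 : s ^ 2 < 1 := by nlinarith
  calc ∑' n : ℕ, s ^ ((n + 1) ^ 2) ≤ ∑' n : ℕ, s * (s ^ 2) ^ n :=
        (summable_pow_add_one_sq hs0 hs1).tsum_le_tsum (pow_add_one_sq_le hs0 hs1.le)
          ((summable_geometric_of_lt_one (sq_nonneg s) hs2).mul_left s)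
    _ = s / (1 - s ^ 2) := by
        rw [tsum_mul_left, tsum_geometric_of_lt_one (sq_nonneg s) hs2, div_eq_mul_inv]

lemma hasSum_zpow_sq (hs0 : 0 ≤ s) (hs1 : s < 1) :
    HasSum (fun k : ℤ ↦ s ^ (k ^ 2)) (1 + 2 * ∑' n : ℕ, s ^ ((n + 1) ^ 2)) := by
  have hpos : HasSum (fun n : ℕ ↦ s ^ (((n : ℤ) + 1) ^ 2)) (∑' n : ℕ, s ^ ((n + 1) ^ 2)) :=
    (summable_pow_add_one_sq hs0 hs1).hasSum.congr_fun fun n ↦ by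
      rw [← zpow_natCast]
      norm_cast
  have hneg : HasSum (fun n : ℕ ↦ s ^ ((-((n : ℤ) + 1)) ^ 2)) (∑' n : ℕ, s ^ ((n + 1) ^ 2)) :=
    hpos.congr_fun fun n ↦ by rw [neg_sq]
  convert HasSum.of_add_one_of_neg_add_one (f := fun k : ℤ ↦ s ^ (k ^ 2)) hpos hneg using 1
  simp only [ne_eq, OfNat.ofNat_ne_zero, not_false_eq_true, zero_pow, zpow_zero]
  ring

lemma tsum_zpow_sq_le (hs0 : 0 ≤ s) (hs1 : s < 1) :
    ∑' k : ℤ, s ^ (k ^ 2) ≤ 1 + 2 * (s / (1 - s ^ 2)) := by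
  rw [(hasSum_zpow_sq hs0 hs1).tsum_eq]
  gcongr
  exact tsum_pow_add_one_sq_le hs0 hs1

lemma one_add_two_mul_div_le (hs0 : 0 < s) (hs1 : s < 1) :
    1 + 2 * (s / (1 - s ^ 2)) ≤ (1 + s ^ 2) / ((1 - s ^ 2) * (1 - (s ^ 2) ^ 3) * s) := by
  have h2 : 0 < 1 - s ^ 2 := by nlinarith
  have h6 : 0 < 1 - (s ^ 2) ^ 3 := by
    have : (s ^ 2) ^ 3 < 1 := pow_lt_one₀ (sq_nonneg s) (by linarith) (by norm_num)
    linarith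
  rw [le_div_iff₀ (by positivity)]
  calc (1 + 2 * (s / (1 - s ^ 2))) * ((1 - s ^ 2) * (1 - (s ^ 2) ^ 3) * s)
      = (1 - s ^ 2 + 2 * s) * (1 - (s ^ 2) ^ 3) * s := by field_simp
    _ ≤ 2 * 1 * s := by
        gcongr
        · nlinarith [sq_nonneg (1 - s)]
        · nlinarith [pow_pos hs0 6]
    _ ≤ 1 + s ^ 2 := by nlinarith [sq_nonneg (1 - s)]

end GaussianSum

lemma tsum_sqrt_zpow_sq_le {q : ℝ} (hq0 : 0 < q) (hq1 : q < 1) :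
    ∑' k : ℤ, √q ^ (k ^ 2) ≤
      (∏' k : ℕ, (1 - q ^ (2 * k + 2))) / ((∏' k : ℕ, (1 - q ^ (2 * k + 1))) ^ 2 * √q) := by
  have hs0 : 0 < √q := sqrt_pos.2 hq0
  have hs1 : √q < 1 := (sqrt_lt' one_pos).2 (by rwa [one_pow])
  calc ∑' k : ℤ, √q ^ (k ^ 2) ≤ 1 + 2 * (√q / (1 - √q ^ 2)) := tsum_zpow_sq_le hs0.le hs1
    _ ≤ (1 + √q ^ 2) / ((1 - √q ^ 2) * (1 - (√q ^ 2) ^ 3) * √q) := one_add_two_mul_div_le hs0 hs1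
    _ = (1 + q) / ((1 - q) * (1 - q ^ 3)) / √q := by rw [sq_sqrt hq0.le, div_div]
    _ ≤ _ := (div_le_div_of_nonneg_right (one_add_div_le_tprod_div_sq hq0 hq1) hs0.le).trans_eq
        (div_div _ _ _)

lemma zpow_sq_mul_zpow_le {q x : ℝ} (hq0 : 0 < q) (hq1 : q < 1) (hx : 0 < x) (k : ℤ) :
    q ^ (k ^ 2) * x ^ k ≤ exp (-(log x) ^ 2 / (2 * log q)) * √q ^ (k ^ 2) := by
  have hlq : log q < 0 := log_neg hq0 hq1
  rw [← log_le_log_iff (by positivity) (by positivity), log_mul (by positivity) (by positivity),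
    log_mul (by positivity) (by positivity), log_zpow, log_zpow, log_zpow, log_exp,
    log_sqrt hq0.le]
  have hsquare : (log q * k + log x) ^ 2 / (2 * log q) ≤ 0 :=
    div_nonpos_of_nonneg_of_nonpos (sq_nonneg _) (by linarith)
  have : ((k ^ 2 : ℤ) : ℝ) * log q + k * log x
      = -(log x) ^ 2 / (2 * log q) + ((k ^ 2 : ℤ) : ℝ) * (log q / 2)
        + (log q * k + log x) ^ 2 / (2 * log q) := by
    field_simp [hlq.ne]
    push_cast
    ring
  linarith

/-- For `0 < q < 1` and nonzero `z : ℂ`,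
`|θ₃(z;q)| = |∑_{k∈ℤ} q^{k²} z^k| ≤ ((q²;q²)_∞ / ((q;q²)_∞² √q)) · exp(-(log|z|)²/(2 log q))`. -/
theorem stmt6 (q : ℝ) (hq0 : 0 < q) (hq1 : q < 1) (z : ℂ) (hz : z ≠ 0) :
    ‖∑' k : ℤ, (q : ℂ) ^ (k ^ 2) * z ^ k‖ ≤
      (∏' k : ℕ, (1 - q ^ (2 * k + 2))) /
        ((∏' k : ℕ, (1 - q ^ (2 * k + 1))) ^ 2 * Real.sqrt q) *
        Real.exp (-(Real.log ‖z‖) ^ 2 / (2 * Real.log q)) := by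
  set E := exp (-(log ‖z‖) ^ 2 / (2 * log q))
  have hterm (k : ℤ) : ‖(q : ℂ) ^ (k ^ 2) * z ^ k‖ ≤ E * √q ^ (k ^ 2) := by
    rw [norm_mul, norm_zpow, norm_zpow, Complex.norm_real, norm_of_nonneg hq0.le]
    exact zpow_sq_mul_zpow_le hq0 hq1 (norm_pos_iff.2 hz) k
  have hs1 : √q < 1 := (sqrt_lt' one_pos).2 (by rwa [one_pow])
  have hgauss := hasSum_zpow_sq (sqrt_nonneg q) hs1
  calc ‖∑' k : ℤ, (q : ℂ) ^ (k ^ 2) * z ^ k‖ ≤ E * ∑' k : ℤ, √q ^ (k ^ 2) := by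
        rw [hgauss.tsum_eq]
        exact tsum_of_norm_bounded (hgauss.mul_left E) hterm
    _ ≤ E * ((∏' k : ℕ, (1 - q ^ (2 * k + 2))) /
          ((∏' k : ℕ, (1 - q ^ (2 * k + 1))) ^ 2 * √q)) := by
        gcongr
        exact tsum_sqrt_zpow_sq_le hq0 hq1
    _ = _ := mul_comm _ _
end

section
/- Let 0 < q < 1, let ν > −1, let τ > 0 and θ be real numbers, and let z be a nonzero complex number. Then for every positive integer n, writing ∑_{k=0}^∞ q^{k²} (−q^{2nτ} z² e^{2πinθ})^k / ( (q;q)_k (q^{ν+1};q)_k ) = 1 + r_n, one has |r_n| ≤ |z|² q^{2nτ+1} exp( |z|² q^{2nτ+1} / (1−q) ) / ( (1−q) (q^{ν+1};q)_∞ ). -/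
open scoped BigOperators

/-- The finite q-Pochhammer symbol `(w;q)_k = ∏_{j=0}^{k-1} (1 - w q^j)` as a complex number. -/
noncomputable def qPochCW (w : ℂ) (q : ℝ) (k : ℕ) : ℂ :=
  ∏ j ∈ Finset.range k, (1 - w * (q : ℂ) ^ j)

/-!
The `k`-th term of the series has modulus at most `P⁻¹ x^k / k!`, where
`x = |z|² q^{2nτ+1}/(1-q)` and `P = (q^{ν+1};q)_∞`: indeed `(q^{ν+1};q)_k ≥ P` because all
factors lie in `(0,1]`, and `q^{k²}/(q;q)_k ≤ (q/(1-q))^k / k!` factor by factor, from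
`1 - q^{j+1} = (1-q)(1 + q + ⋯ + q^j) ≥ (1-q)(j+1)q^j`. Summing over `k ≥ 1` gives
`|r_n| ≤ P⁻¹ (e^x - 1) ≤ P⁻¹ x e^x`.
-/

open Finset
open scoped Nat

section OneSubProduct

variable {f : ℕ → ℝ}

theorem multipliable_one_sub (hf : Summable f) : Multipliable fun k => 1 - f k := by
  simpa only [sub_eq_add_neg] using Real.multipliable_one_add_of_summable hf.neg

theorem tprod_one_sub_le_prod_range (hf : Summable f) (hf0 : ∀ k, 0 ≤ f k)
    (hf1 : ∀ k, f k ≤ 1) (n : ℕ) : ∏' k, (1 - f k) ≤ ∏ k ∈ range n, (1 - f k) := by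
  refine Antitone.le_of_tendsto (antitone_nat_of_succ_le fun m => ?_)
    (multipliable_one_sub hf).hasProd.tendsto_prod_nat n
  rw [prod_range_succ]
  exact mul_le_of_le_one_right (prod_nonneg fun k _ => sub_nonneg.2 (hf1 k))
    (by linarith [hf0 m])

theorem tprod_one_sub_pos_s16 (hf : Summable f) (hf1 : ∀ k, f k < 1) :
    0 < ∏' k, (1 - f k) := by
  refine (tprod_nonneg fun k => sub_nonneg.2 (hf1 k).le).lt_of_ne' ?_
  simpa only [sub_eq_add_neg] using
    tprod_one_add_ne_zero_of_summable (fun k => by linarith [hf1 k]) hf.neg.norm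

end OneSubProduct

theorem qPochCW_ofReal (a q : ℝ) (k : ℕ) :
    qPochCW (a : ℂ) q k = ((∏ j ∈ range k, (1 - a * q ^ j) : ℝ) : ℂ) := by
  simp [qPochCW]

theorem prod_one_sub_mul_pow_nonneg {a q : ℝ} (ha1 : a ≤ 1) (hq0 : 0 ≤ q) (hq1 : q ≤ 1)
    (k : ℕ) : 0 ≤ ∏ j ∈ range k, (1 - a * q ^ j) :=
  prod_nonneg fun j _ => sub_nonneg.2 (mul_le_one₀ ha1 (pow_nonneg hq0 j) (pow_le_one₀ hq0 hq1))

theorem norm_qPochCW_ofReal {a q : ℝ} (ha1 : a ≤ 1) (hq0 : 0 ≤ q) (hq1 : q ≤ 1)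
    (k : ℕ) : ‖qPochCW (a : ℂ) q k‖ = ∏ j ∈ range k, (1 - a * q ^ j) := by
  rw [qPochCW_ofReal, Complex.norm_real,
    Real.norm_of_nonneg (prod_one_sub_mul_pow_nonneg ha1 hq0 hq1 k)]

theorem one_sub_mul_succ_mul_pow_le_one_sub_pow_succ {q : ℝ} (hq0 : 0 ≤ q) (hq1 : q ≤ 1)
    (k : ℕ) :
    (1 - q) * (k + 1) * q ^ k ≤ 1 - q ^ (k + 1) := by
  rw [← mul_neg_geom_sum, mul_assoc]
  refine mul_le_mul_of_nonneg_left ?_ (sub_nonneg.2 hq1)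
  simpa using card_nsmul_le_sum (range (k + 1)) (q ^ ·) (q ^ k)
    fun i hi => pow_le_pow_of_le_one hq0 hq1 (Nat.lt_succ_iff.1 (mem_range.1 hi))

theorem pow_sq_mul_pow_div_prod_le {q : ℝ} (hq0 : 0 < q) (hq1 : q < 1) {r : ℝ} (hr : 0 ≤ r)
    (k : ℕ) :
    q ^ (k ^ 2) * r ^ k / ∏ j ∈ range k, (1 - q * q ^ j) ≤ (q * r / (1 - q)) ^ k / k ! := by
  induction k with
  | zero => simp
  | succ k ih =>
    have hk : (0 : ℝ) < 1 - q * q ^ k := by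
      rw [← _root_.pow_succ']; exact sub_pos.2 (pow_lt_one₀ hq0.le hq1 k.succ_ne_zero)
    have hfactor : q ^ (2 * k + 1) * r / (1 - q * q ^ k) ≤ q * r / (1 - q) / (k + 1) := by
      rw [div_div, div_le_div_iff₀ hk (by nlinarith), ← _root_.pow_succ']
      have hpow : q ^ (2 * k) ≤ q ^ k := pow_le_pow_of_le_one hq0.le hq1.le (by omega)
      have := one_sub_mul_succ_mul_pow_le_one_sub_pow_succ hq0.le hq1.le k
      calc q ^ (2 * k + 1) * r * ((1 - q) * (k + 1))
          = q * r * ((1 - q) * (k + 1) * q ^ (2 * k)) := by ring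
        _ ≤ q * r * ((1 - q) * (k + 1) * q ^ k) := by gcongr
        _ ≤ q * r * (1 - q ^ (k + 1)) := by gcongr
    have hsplit : q ^ ((k + 1) ^ 2) * r ^ (k + 1) / (∏ j ∈ range (k + 1), (1 - q * q ^ j)) =
        q ^ (k ^ 2) * r ^ k / (∏ j ∈ range k, (1 - q * q ^ j)) *
          (q ^ (2 * k + 1) * r / (1 - q * q ^ k)) := by
      rw [prod_range_succ, show (k + 1) ^ 2 = k ^ 2 + (2 * k + 1) by ring, pow_add, pow_succ r]
      field_simp
    rw [hsplit, pow_succ (q * r / (1 - q)) k, Nat.factorial_succ, Nat.cast_mul, Nat.cast_succ,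
      show ∀ a b c d : ℝ, a * b / (c * d) = a / d * (b / c) by intros; ring]
    exact mul_le_mul ih hfactor (by positivity) (by positivity)

theorem norm_tsum_sub_apply_zero_le {E : Type*} [NormedAddCommGroup E] [CompleteSpace E]
    {a : ℕ → E} {C x : ℝ} (h : ∀ k, ‖a k‖ ≤ C * (x ^ k / k !)) :
    ‖∑' k, a k - a 0‖ ≤ C * (Real.exp x - 1) := by
  have hexp : HasSum (fun k => C * (x ^ (k + 1) / (k + 1) !)) (C * (Real.exp x - 1)) := by
    refine HasSum.mul_left C ?_
    simpa [Real.exp_eq_exp_ℝ] using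
      (hasSum_nat_add_iff' 1).2 (NormedSpace.expSeries_div_hasSum_exp x)
  have hsum : Summable a :=
    .of_norm_bounded ((Real.summable_pow_div_factorial x).mul_left C) h
  rw [hsum.tsum_eq_zero_add, add_sub_cancel_left]
  exact tsum_of_norm_bounded hexp fun k => h (k + 1)

theorem Real.exp_sub_one_le_mul_exp (x : ℝ) : Real.exp x - 1 ≤ x * Real.exp x := by
  have h := mul_le_mul_of_nonneg_right (Real.one_sub_le_exp_neg x) (Real.exp_pos x).le
  rw [← Real.exp_add, neg_add_cancel, Real.exp_zero] at h
  linarith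

theorem tprod_one_sub_mul_pow_pos {q A : ℝ} (hq0 : 0 ≤ q) (hq1 : q < 1) (hA0 : 0 ≤ A)
    (hA1 : A < 1) : 0 < ∏' j : ℕ, (1 - A * q ^ j) :=
  tprod_one_sub_pos_s16 ((summable_geometric_of_lt_one hq0 hq1).mul_left A) fun _ =>
    (mul_le_of_le_one_right hA0 (pow_le_one₀ hq0 hq1.le)).trans_lt hA1

theorem norm_qBesselTerm_le {q A : ℝ} (hq0 : 0 < q) (hq1 : q < 1) (hA0 : 0 ≤ A) (hA1 : A < 1)
    (w : ℂ) (k : ℕ) :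
    ‖(q : ℂ) ^ (k ^ 2) * w ^ k / (qPochCW (q : ℂ) q k * qPochCW (A : ℂ) q k)‖ ≤
      (∏' j : ℕ, (1 - A * q ^ j))⁻¹ * ((q * ‖w‖ / (1 - q)) ^ k / k !) := by
  have hAq : ∀ j : ℕ, 0 ≤ A * q ^ j ∧ A * q ^ j ≤ 1 := fun j =>
    ⟨by positivity, mul_le_one₀ hA1.le (pow_nonneg hq0.le j) (pow_le_one₀ hq0.le hq1.le)⟩
  rw [norm_div, norm_mul, norm_mul, norm_pow, norm_pow, Complex.norm_real,
    Real.norm_of_nonneg hq0.le, norm_qPochCW_ofReal hq1.le hq0.le hq1.le,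
    norm_qPochCW_ofReal hA1.le hq0.le hq1.le, ← div_div, div_eq_inv_mul]
  exact mul_le_mul
    (inv_anti₀ (tprod_one_sub_mul_pow_pos hq0.le hq1 hA0 hA1)
      (tprod_one_sub_le_prod_range ((summable_geometric_of_lt_one hq0.le hq1).mul_left A)
        (fun j => (hAq j).1) (fun j => (hAq j).2) k))
    (pow_sq_mul_pow_div_prod_le hq0 hq1 (norm_nonneg w) k)
    (div_nonneg (by positivity) (prod_one_sub_mul_pow_nonneg hq1.le hq0.le hq1.le k))
    (inv_nonneg.2 (tprod_one_sub_mul_pow_pos hq0.le hq1 hA0 hA1).le)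

theorem stmt16_general (q : ℝ) (hq0 : 0 < q) (hq1 : q < 1) (ν : ℝ) (hν : -1 < ν)
    (τ θ : ℝ) (z : ℂ) (n : ℕ) :
    ‖(∑' k : ℕ, (q : ℂ) ^ (k ^ 2) *
          (-(((q ^ (2 * (n : ℝ) * τ) : ℝ) : ℂ) * z ^ 2 *
            Complex.exp (((2 * Real.pi * n * θ : ℝ) : ℂ) * Complex.I))) ^ k /
          (qPochCW (q : ℂ) q k * qPochCW ((q ^ (ν + 1) : ℝ) : ℂ) q k)) - 1‖ ≤
      ‖z‖ ^ 2 * q ^ (2 * (n : ℝ) * τ + 1) *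
        Real.exp (‖z‖ ^ 2 * q ^ (2 * (n : ℝ) * τ + 1) / (1 - q)) /
        ((1 - q) * ∏' k : ℕ, (1 - q ^ (ν + 1) * q ^ k)) := by
  set w : ℂ := -(((q ^ (2 * (n : ℝ) * τ) : ℝ) : ℂ) * z ^ 2 *
    Complex.exp (((2 * Real.pi * n * θ : ℝ) : ℂ) * Complex.I))
  set P := ∏' k : ℕ, (1 - q ^ (ν + 1) * q ^ k)
  set x := ‖z‖ ^ 2 * q ^ (2 * (n : ℝ) * τ + 1) / (1 - q) with hx
  have hwx : q * ‖w‖ / (1 - q) = x := by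
    rw [hx, norm_neg, norm_mul, norm_mul, Complex.norm_exp_ofReal_mul_I, Complex.norm_real,
      norm_pow, Real.norm_of_nonneg (by positivity), Real.rpow_add hq0, Real.rpow_one]
    ring
  have hA0 : 0 ≤ q ^ (ν + 1) := Real.rpow_nonneg hq0.le (ν + 1)
  have hA1 : q ^ (ν + 1) < 1 := Real.rpow_lt_one hq0.le hq1 (by linarith)
  have hP : 0 < P := tprod_one_sub_mul_pow_pos hq0.le hq1 hA0 hA1
  have hbound :=
    norm_tsum_sub_apply_zero_le fun k => norm_qBesselTerm_le hq0 hq1 hA0 hA1 w k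
  simp only [pow_zero, qPochCW, prod_range_zero, mul_one, div_one, hwx] at hbound
  calc _ ≤ P⁻¹ * (Real.exp x - 1) := hbound
    _ ≤ P⁻¹ * (x * Real.exp x) := by gcongr; exact Real.exp_sub_one_le_mul_exp x
    _ = _ := by rw [hx]; field_simp

/-- case 1 of the theorem for Jackson's q-Bessel function `J_ν^{(2)}`:
for `0 < q < 1`, `ν > -1`, `τ > 0`, `θ ∈ ℝ`, `z ≠ 0`, and every positive integer `n`,
writing `∑_{k=0}^∞ q^{k²} (-q^{2nτ} z² e^{2πinθ})^k / ((q;q)_k (q^{ν+1};q)_k) = 1 + r_n`,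
one has `|r_n| ≤ |z|² q^{2nτ+1} exp(|z|² q^{2nτ+1}/(1-q)) / ((1-q)(q^{ν+1};q)_∞)`. -/
theorem stmt16 (q : ℝ) (hq0 : 0 < q) (hq1 : q < 1) (ν : ℝ) (hν : -1 < ν)
    (τ θ : ℝ) (hτ : 0 < τ) (z : ℂ) (hz : z ≠ 0) (n : ℕ) (hn : 0 < n) :
    ‖(∑' k : ℕ, (q : ℂ) ^ (k ^ 2) *
          (-(((q ^ (2 * (n : ℝ) * τ) : ℝ) : ℂ) * z ^ 2 *
            Complex.exp (((2 * Real.pi * n * θ : ℝ) : ℂ) * Complex.I))) ^ k /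
          (qPochCW (q : ℂ) q k * qPochCW ((q ^ (ν + 1) : ℝ) : ℂ) q k)) - 1‖ ≤
      ‖z‖ ^ 2 * q ^ (2 * (n : ℝ) * τ + 1) *
        Real.exp (‖z‖ ^ 2 * q ^ (2 * (n : ℝ) * τ + 1) / (1 - q)) /
        ((1 - q) * ∏' k : ℕ, (1 - q ^ (ν + 1) * q ^ k)) :=
  stmt16_general q hq0 hq1 ν hν τ θ z n
end

section
/- Let 0 < q < 1, let θ be a real number, let z be a nonzero complex number, and let λ be a fixed real number. Then there exists N such that for every integer n ≥ N for which nθ − λ is an integer, one has | ∑_{k=0}^{n} (q;q)_n q^{k²} e^{2πinkθ} (−z^{−2})^k / ( (q;q)_k (q;q)_{n−k} ) − A_q( e^{2πiλ} z^{−2} ) | ≤ 6 ( A_q(−|z|^{−2}) / (q;q)_∞ ) · ( q^{n/2} + q^{⌊n/2⌋²} / |z|^{2⌊n/2⌋} ). The sum on the left equals h_n(sinh ξ_n | q) / (z^n q^{−n²s}), where s = 1/2 + iθπ/log q and sinh ξ_n = (q^{−ns} z − q^{ns} z^{−1})/2. -/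
open scoped BigOperators

/-- The finite q-Pochhammer symbol `(q;q)_k = ∏_{j=1}^k (1 - q^j)` as a complex number. -/
noncomputable def qPochC (q : ℝ) (k : ℕ) : ℂ :=
  ∏ j ∈ Finset.range k, (1 - (q : ℂ) ^ (j + 1))

/-- The infinite q-Pochhammer symbol `(q;q)_∞ = ∏_{k=1}^∞ (1 - q^k)`. -/
noncomputable def qPochInf (q : ℝ) : ℝ :=
  ∏' k : ℕ, (1 - q ^ (k + 1))

/-- The Ramanujan function `A_q(z) = ∑_{k=0}^∞ q^{k²} (-z)^k / (q;q)_k`. -/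
noncomputable def ramanujanAq (q : ℝ) (z : ℂ) : ℂ :=
  ∑' k : ℕ, (q : ℂ) ^ (k ^ 2) * (-z) ^ k / qPochC q k

/-- The Ramanujan function at a real argument,
`A_q(x) = ∑_{k=0}^∞ q^{k²} (-x)^k / (q;q)_k`. -/
noncomputable def ramanujanAqR (q x : ℝ) : ℝ :=
  ∑' k : ℕ, q ^ (k ^ 2) * (-x) ^ k / ∏ j ∈ Finset.range k, (1 - q ^ (j + 1))

/-! Writing `w = e^{2πiλ} z^{-2}` and `a_k = q^{k²} (-w)^k / (q;q)_k` for the terms of `A_q(w)`,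
the condition `nθ - λ ∈ ℤ` turns the finite sum into `∑_{k ≤ n} a_k (q;q)_n / (q;q)_{n-k}`, so the
error is `∑_{k ≤ n} a_k ((q;q)_n / (q;q)_{n-k} - 1)` minus the tail `∑_{k > n} a_k`.
For `k ≤ n/2` the factor `1 - (q;q)_n / (q;q)_{n-k}` is at most `q^{n-k} / (1 - q) ≤ q^{n/2} / (q;q)_∞`.
For `k > m = ⌊n/2⌋` the factor is at most `1`, and the remaining tail `∑_{k > m} |a_k|` is at most
`q^{m²} |w|^m A_q(-|w|) / (q;q)_∞` because `(k + m + 1)² ≥ m² + (k + 1)²`. -/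

open Finset

noncomputable def qPochR (q : ℝ) (k : ℕ) : ℝ := ∏ j ∈ range k, (1 - q ^ (j + 1))

/-- `(q;q)_n / (q;q)_{n-k}`. -/
noncomputable def qPochQuot (q : ℝ) (n k : ℕ) : ℝ := ∏ j ∈ Ico (n - k) n, (1 - q ^ (j + 1))

noncomputable def aqTerm (q : ℝ) (w : ℂ) (k : ℕ) : ℂ := (q : ℂ) ^ (k ^ 2) * (-w) ^ k / qPochC q k

noncomputable def aqMajorant (q x : ℝ) (k : ℕ) : ℝ := q ^ (k ^ 2) * x ^ k / qPochR q k

section QPochhammer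

variable {q : ℝ}

lemma one_sub_pow_succ_pos (hq0 : 0 ≤ q) (hq1 : q < 1) (j : ℕ) : 0 < 1 - q ^ (j + 1) :=
  sub_pos.2 (pow_lt_one₀ hq0 hq1 j.succ_ne_zero)

lemma one_sub_pow_succ_le_one (hq0 : 0 ≤ q) (j : ℕ) : 1 - q ^ (j + 1) ≤ 1 :=
  sub_le_self _ (pow_nonneg hq0 _)

lemma qPochR_pos (hq0 : 0 ≤ q) (hq1 : q < 1) (k : ℕ) : 0 < qPochR q k :=
  prod_pos fun j _ => one_sub_pow_succ_pos hq0 hq1 j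

lemma qPochR_le_one (hq0 : 0 ≤ q) (hq1 : q < 1) (k : ℕ) : qPochR q k ≤ 1 :=
  prod_le_one (fun j _ => (one_sub_pow_succ_pos hq0 hq1 j).le)
    fun j _ => one_sub_pow_succ_le_one hq0 j

lemma qPochC_eq_ofReal (q : ℝ) (k : ℕ) : qPochC q k = qPochR q k := by
  simp [qPochC, qPochR]

lemma summable_log_one_sub_pow_succ (hq0 : 0 ≤ q) (hq1 : q < 1) :
    Summable fun k : ℕ => Real.log (1 - q ^ (k + 1)) := by
  simpa [sub_eq_add_neg, pow_succ] using Real.summable_log_one_add_of_summable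
    ((summable_geometric_of_lt_one hq0 hq1).mul_right q).neg

lemma qPochInf_eq_exp (hq0 : 0 ≤ q) (hq1 : q < 1) :
    qPochInf q = Real.exp (∑' k : ℕ, Real.log (1 - q ^ (k + 1))) :=
  (Real.rexp_tsum_eq_tprod (one_sub_pow_succ_pos hq0 hq1)
    (summable_log_one_sub_pow_succ hq0 hq1)).symm

lemma qPochInf_pos (hq0 : 0 ≤ q) (hq1 : q < 1) : 0 < qPochInf q := by
  rw [qPochInf_eq_exp hq0 hq1]
  exact Real.exp_pos _

lemma qPochInf_le_qPochR (hq0 : 0 ≤ q) (hq1 : q < 1) (k : ℕ) : qPochInf q ≤ qPochR q k := by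
  have hexp : qPochR q k = Real.exp (∑ j ∈ range k, Real.log (1 - q ^ (j + 1))) := by
    rw [Real.exp_sum]
    exact prod_congr rfl fun j _ => (Real.exp_log (one_sub_pow_succ_pos hq0 hq1 j)).symm
  rw [qPochInf_eq_exp hq0 hq1, hexp, Real.exp_le_exp,
    ← (summable_log_one_sub_pow_succ hq0 hq1).sum_add_tsum_nat_add k, add_le_iff_nonpos_right]
  exact tsum_nonpos fun j => Real.log_nonpos (one_sub_pow_succ_pos hq0 hq1 _).le
    (one_sub_pow_succ_le_one hq0 _)

lemma qPochInf_le_one_sub (hq0 : 0 ≤ q) (hq1 : q < 1) : qPochInf q ≤ 1 - q := by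
  simpa [qPochR] using qPochInf_le_qPochR hq0 hq1 1

lemma qPochQuot_nonneg (hq0 : 0 ≤ q) (hq1 : q < 1) (n k : ℕ) : 0 ≤ qPochQuot q n k :=
  prod_nonneg fun j _ => (one_sub_pow_succ_pos hq0 hq1 j).le

lemma qPochQuot_le_one (hq0 : 0 ≤ q) (hq1 : q < 1) (n k : ℕ) : qPochQuot q n k ≤ 1 :=
  prod_le_one (fun j _ => (one_sub_pow_succ_pos hq0 hq1 j).le)
    fun j _ => one_sub_pow_succ_le_one hq0 j

lemma qPochC_eq_mul_qPochQuot (q : ℝ) (n k : ℕ) :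
    qPochC q n = qPochC q (n - k) * qPochQuot q n k := by
  simp only [qPochC, qPochQuot, Complex.ofReal_prod, Complex.ofReal_sub, Complex.ofReal_one,
    Complex.ofReal_pow]
  exact (prod_range_mul_prod_Ico _ (Nat.sub_le n k)).symm

lemma Finset.one_sub_sum_le_prod_one_sub {ι : Type*} (s : Finset ι) {f : ι → ℝ}
    (h0 : ∀ i ∈ s, 0 ≤ f i) (h1 : ∀ i ∈ s, f i ≤ 1) :
    1 - ∑ i ∈ s, f i ≤ ∏ i ∈ s, (1 - f i) := by
  classical
  induction s using Finset.induction_on with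
  | empty => simp
  | insert a s ha ih =>
    simp only [mem_insert, forall_eq_or_imp] at h0 h1
    rw [sum_insert ha, prod_insert ha]
    have hprod : 0 ≤ ∏ i ∈ s, (1 - f i) := prod_nonneg fun i hi => sub_nonneg.2 (h1.2 i hi)
    have hsum : 0 ≤ ∑ i ∈ s, f i := sum_nonneg h0.2
    nlinarith [ih h0.2 h1.2]

lemma one_sub_qPochQuot_le (hq0 : 0 ≤ q) (hq1 : q < 1) (n k : ℕ) :
    1 - qPochQuot q n k ≤ q ^ (n - k) / (1 - q) := by
  have hprod := (Ico (n - k) n).one_sub_sum_le_prod_one_sub (f := fun j => q ^ (j + 1))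
    (fun j _ => pow_nonneg hq0 _) fun j _ => pow_le_one₀ hq0 hq1.le
  have hgeom : ∑ j ∈ Ico (n - k) n, q ^ (j + 1) ≤ q ^ (n - k) / (1 - q) := by
    simp only [pow_succ, ← sum_mul]
    calc (∑ j ∈ Ico (n - k) n, q ^ j) * q ≤ (∑ j ∈ Ico (n - k) n, q ^ j) * 1 :=
          mul_le_mul_of_nonneg_left hq1.le (sum_nonneg fun j _ => pow_nonneg hq0 _)
      _ ≤ q ^ (n - k) / (1 - q) := by rw [mul_one]; exact geom_sum_Ico_le_of_lt_one hq0 hq1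
  unfold qPochQuot
  linarith

lemma one_sub_qPochQuot_le_rpow (hq0 : 0 ≤ q) (hq1 : q < 1) {n k : ℕ} (hk : k ≤ n / 2) :
    1 - qPochQuot q n k ≤ q ^ ((n : ℝ) / 2) / (1 - q) := by
  refine (one_sub_qPochQuot_le hq0 hq1 n k).trans (div_le_div_of_nonneg_right ?_ (by linarith))
  have hkn : (k : ℝ) ≤ n / 2 := (Nat.cast_le.2 hk).trans Nat.cast_div_le
  rw [← Real.rpow_natCast, Nat.cast_sub (by omega)]
  exact Real.rpow_le_rpow_of_exponent_ge' hq0 hq1.le (by positivity) (by linarith)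

end QPochhammer

section RamanujanSeries

variable {q x : ℝ}

lemma ramanujanAq_eq_tsum_aqTerm (q : ℝ) (w : ℂ) : ramanujanAq q w = ∑' k, aqTerm q w k := rfl

lemma aqMajorant_nonneg (hq0 : 0 ≤ q) (hq1 : q < 1) (hx : 0 ≤ x) (k : ℕ) :
    0 ≤ aqMajorant q x k :=
  div_nonneg (by positivity) (qPochR_pos hq0 hq1 k).le

lemma norm_aqTerm (hq0 : 0 ≤ q) (hq1 : q < 1) (w : ℂ) (k : ℕ) :
    ‖aqTerm q w k‖ = aqMajorant q ‖w‖ k := by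
  rw [aqTerm, aqMajorant, qPochC_eq_ofReal, norm_div, norm_mul, norm_pow, norm_pow, norm_neg,
    Complex.norm_real, Complex.norm_real, Real.norm_of_nonneg hq0,
    Real.norm_of_nonneg (qPochR_pos hq0 hq1 k).le]

lemma ramanujanAqR_neg_eq_tsum_aqMajorant (q x : ℝ) :
    ramanujanAqR q (-x) = ∑' k, aqMajorant q x k := by
  simp [ramanujanAqR, aqMajorant, qPochR]

lemma summable_aqMajorant (hq0 : 0 ≤ q) (hq1 : q < 1) (hx : 0 ≤ x) :
    Summable (aqMajorant q x) := by
  refine Summable.of_norm_bounded_eventually_nat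
    ((summable_geometric_two).div_const (qPochInf q)) ?_
  have hsmall : ∀ᶠ k : ℕ in Filter.atTop, x * q ^ k ≤ 1 / 2 :=
    ((tendsto_pow_atTop_nhds_zero_of_lt_one hq0 hq1).const_mul x).eventually_le_const
      (by norm_num : x * 0 < 1 / 2)
  filter_upwards [hsmall] with k hk
  rw [Real.norm_of_nonneg (aqMajorant_nonneg hq0 hq1 hx k), aqMajorant]
  -- `q^{k²} x^k = (x q^k)^k`
  have hnum : q ^ (k ^ 2) * x ^ k ≤ (1 / 2) ^ k := by
    rw [sq, pow_mul, ← mul_pow, mul_comm]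
    exact pow_le_pow_left₀ (by positivity) hk k
  exact div_le_div₀ (by positivity) hnum (qPochInf_pos hq0 hq1) (qPochInf_le_qPochR hq0 hq1 k)

lemma aqMajorant_add_succ_le (hq0 : 0 ≤ q) (hq1 : q < 1) (hx : 0 ≤ x) (m k : ℕ) :
    aqMajorant q x (k + (m + 1)) ≤ q ^ (m ^ 2) * x ^ m / qPochInf q * aqMajorant q x (k + 1) := by
  have hnum : q ^ ((k + (m + 1)) ^ 2) * x ^ (k + (m + 1)) ≤
      q ^ (m ^ 2) * x ^ m * (q ^ ((k + 1) ^ 2) * x ^ (k + 1)) := by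
    have hsq : (k + (m + 1)) ^ 2 = m ^ 2 + (k + 1) ^ 2 + 2 * m * (k + 1) := by ring
    rw [hsq, show k + (m + 1) = m + (k + 1) by ring, pow_add, pow_add, pow_add]
    have := pow_le_one₀ (n := 2 * m * (k + 1)) hq0 hq1.le
    have : 0 ≤ q ^ (m ^ 2) * q ^ ((k + 1) ^ 2) * (x ^ m * x ^ (k + 1)) := by positivity
    nlinarith
  have hP := qPochR_pos hq0 hq1 (k + 1)
  have hPinf := qPochInf_pos hq0 hq1
  calc aqMajorant q x (k + (m + 1))
      ≤ q ^ (m ^ 2) * x ^ m * (q ^ ((k + 1) ^ 2) * x ^ (k + 1)) / qPochInf q :=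
        div_le_div₀ (by positivity) hnum hPinf (qPochInf_le_qPochR hq0 hq1 _)
    _ ≤ q ^ (m ^ 2) * x ^ m * (aqMajorant q x (k + 1)) / qPochInf q := by
        gcongr
        rw [aqMajorant, le_div_iff₀ hP]
        exact mul_le_of_le_one_right (by positivity) (qPochR_le_one hq0 hq1 _)
    _ = q ^ (m ^ 2) * x ^ m / qPochInf q * aqMajorant q x (k + 1) := by ring

lemma tsum_aqMajorant_add_le (hq0 : 0 ≤ q) (hq1 : q < 1) (hx : 0 ≤ x) (m : ℕ) :
    ∑' k, aqMajorant q x (k + (m + 1)) ≤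
      q ^ (m ^ 2) * x ^ m * ((∑' k, aqMajorant q x k) / qPochInf q) := by
  have hs := summable_aqMajorant hq0 hq1 hx
  have hshift : ∑' k, aqMajorant q x (k + 1) ≤ ∑' k, aqMajorant q x k := by
    rw [hs.tsum_eq_zero_add]
    exact le_add_of_nonneg_left (aqMajorant_nonneg hq0 hq1 hx 0)
  calc ∑' k, aqMajorant q x (k + (m + 1))
      ≤ ∑' k, q ^ (m ^ 2) * x ^ m / qPochInf q * aqMajorant q x (k + 1) :=
        Summable.tsum_le_tsum (aqMajorant_add_succ_le hq0 hq1 hx m)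
          ((summable_nat_add_iff _).2 hs) (((summable_nat_add_iff 1).2 hs).mul_left _)
    _ = q ^ (m ^ 2) * x ^ m / qPochInf q * ∑' k, aqMajorant q x (k + 1) := tsum_mul_left
    _ ≤ q ^ (m ^ 2) * x ^ m / qPochInf q * ∑' k, aqMajorant q x k :=
        mul_le_mul_of_nonneg_left hshift (div_nonneg (by positivity) (qPochInf_pos hq0 hq1).le)
    _ = q ^ (m ^ 2) * x ^ m * ((∑' k, aqMajorant q x k) / qPochInf q) := by ring

end RamanujanSeries

lemma antitone_sum_range_mul_add_tsum {t c : ℕ → ℝ} (ht : Summable t) (ht0 : ∀ k, 0 ≤ t k)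
    (hc : ∀ k, c k ≤ 1) : Antitone fun N => ∑ k ∈ range N, t k * c k + ∑' k, t (k + N) := by
  refine antitone_nat_of_succ_le fun N => ?_
  rw [sum_range_succ, ((summable_nat_add_iff N).2 ht).tsum_eq_zero_add, zero_add]
  simp only [add_right_comm _ 1 N, ← add_assoc]
  nlinarith [ht0 N, hc N]

lemma norm_sum_range_mul_sub_tsum_le {R : Type*} [NormedRing R] [CompleteSpace R] {a : ℕ → R}
    (ha : Summable fun k => ‖a k‖) (c : ℕ → R) (N : ℕ) :
    ‖∑ k ∈ range N, a k * c k - ∑' k, a k‖ ≤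
      ∑ k ∈ range N, ‖a k‖ * ‖c k - 1‖ + ∑' k, ‖a (k + N)‖ := by
  have hsplit : ∑ k ∈ range N, a k * c k - ∑' k, a k =
      ∑ k ∈ range N, a k * (c k - 1) - ∑' k, a (k + N) := by
    rw [← ha.of_norm.sum_add_tsum_nat_add N, sub_add_eq_sub_sub, ← sum_sub_distrib]
    simp only [mul_sub, mul_one]
  rw [hsplit]
  refine (norm_sub_le _ _).trans (add_le_add ?_ ?_)
  · exact (norm_sum_le _ _).trans (sum_le_sum fun k _ => norm_mul_le _ _)
  · exact norm_tsum_le_tsum_norm ((summable_nat_add_iff N).2 ha)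

section RamanujanApproximation

variable {q : ℝ}

lemma norm_sum_aqTerm_mul_qPochQuot_sub_le (hq0 : 0 ≤ q) (hq1 : q < 1) (w : ℂ) (n N : ℕ) :
    ‖∑ k ∈ range N, aqTerm q w k * qPochQuot q n k - ramanujanAq q w‖ ≤
      ∑ k ∈ range N, aqMajorant q ‖w‖ k * (1 - qPochQuot q n k) +
        ∑' k, aqMajorant q ‖w‖ (k + N) := by
  have hnorm : (fun k => ‖aqTerm q w k‖) = aqMajorant q ‖w‖ := funext (norm_aqTerm hq0 hq1 w)
  have hquot (k : ℕ) : ‖(qPochQuot q n k : ℂ) - 1‖ = 1 - qPochQuot q n k := by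
    rw [← Complex.ofReal_one, ← Complex.ofReal_sub, Complex.norm_real,
      Real.norm_of_nonpos (by linarith [qPochQuot_le_one hq0 hq1 n k]), neg_sub]
  rw [ramanujanAq_eq_tsum_aqTerm]
  have := norm_sum_range_mul_sub_tsum_le (hnorm ▸ summable_aqMajorant hq0 hq1 (norm_nonneg w))
    (fun k => (qPochQuot q n k : ℂ)) N
  simpa only [hquot, norm_aqTerm hq0 hq1] using this

lemma sum_aqMajorant_mul_one_sub_qPochQuot_le {x : ℝ} (hq0 : 0 ≤ q) (hq1 : q < 1) (hx : 0 ≤ x)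
    (n : ℕ) :
    ∑ k ∈ range (n / 2 + 1), aqMajorant q x k * (1 - qPochQuot q n k) ≤
      q ^ ((n : ℝ) / 2) * ((∑' k, aqMajorant q x k) / qPochInf q) := by
  have hs := summable_aqMajorant hq0 hq1 hx
  have hA : 0 ≤ ∑' k, aqMajorant q x k := tsum_nonneg (aqMajorant_nonneg hq0 hq1 hx)
  calc ∑ k ∈ range (n / 2 + 1), aqMajorant q x k * (1 - qPochQuot q n k)
      ≤ ∑ k ∈ range (n / 2 + 1), aqMajorant q x k * (q ^ ((n : ℝ) / 2) / (1 - q)) :=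
        sum_le_sum fun k hk => mul_le_mul_of_nonneg_left
          (one_sub_qPochQuot_le_rpow hq0 hq1 (Nat.lt_succ_iff.1 (mem_range.1 hk)))
          (aqMajorant_nonneg hq0 hq1 hx k)
    _ ≤ (∑' k, aqMajorant q x k) * (q ^ ((n : ℝ) / 2) / (1 - q)) := by
        rw [← sum_mul]
        exact mul_le_mul_of_nonneg_right
          (hs.sum_le_tsum _ fun k _ => aqMajorant_nonneg hq0 hq1 hx k)
          (div_nonneg (by positivity) (by linarith))
    _ = q ^ ((n : ℝ) / 2) * ((∑' k, aqMajorant q x k) / (1 - q)) := by ring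
    _ ≤ q ^ ((n : ℝ) / 2) * ((∑' k, aqMajorant q x k) / qPochInf q) := by
        gcongr
        · exact qPochInf_pos hq0 hq1
        · exact qPochInf_le_one_sub hq0 hq1

end RamanujanApproximation

lemma cexp_two_pi_mul_I_eq_pow {n : ℕ} {θ lam : ℝ} {M : ℤ} (h : (n : ℝ) * θ = M + lam)
    (k : ℕ) :
    Complex.exp (((2 * Real.pi * n * k * θ : ℝ) : ℂ) * Complex.I) =
      Complex.exp (((2 * Real.pi * lam : ℝ) : ℂ) * Complex.I) ^ k := by
  have hC : (n : ℂ) * θ = M + lam := by exact_mod_cast congrArg Complex.ofReal h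
  have harg : ((2 * Real.pi * n * k * θ : ℝ) : ℂ) * Complex.I =
      ((k * M : ℤ) : ℂ) * (2 * Real.pi * Complex.I) +
        k * (((2 * Real.pi * lam : ℝ) : ℂ) * Complex.I) := by
    push_cast
    linear_combination (2 * (Real.pi : ℂ) * k * Complex.I) * hC
  rw [harg, Complex.exp_add, Complex.exp_int_mul_two_pi_mul_I, one_mul, ← Complex.exp_nat_mul]

lemma qBinomial_term_eq_aqTerm_mul_qPochQuot {q : ℝ} (hq0 : 0 ≤ q) (hq1 : q < 1) (u v : ℂ)
    (n k : ℕ) :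
    qPochC q n * (q : ℂ) ^ (k ^ 2) * u ^ k * (-v) ^ k / (qPochC q k * qPochC q (n - k)) =
      aqTerm q (u * v) k * qPochQuot q n k := by
  have hk : qPochC q k ≠ 0 := by
    rw [qPochC_eq_ofReal]; exact_mod_cast (qPochR_pos hq0 hq1 k).ne'
  have hnk : qPochC q (n - k) ≠ 0 := by
    rw [qPochC_eq_ofReal]; exact_mod_cast (qPochR_pos hq0 hq1 (n - k)).ne'
  rw [aqTerm, qPochC_eq_mul_qPochQuot q n k, neg_mul_eq_mul_neg, mul_pow]
  field_simp

theorem stmt17_general (q : ℝ) (hq0 : 0 < q) (hq1 : q < 1) (θ : ℝ) (z : ℂ)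
    (lam : ℝ) :
    ∃ N : ℕ, ∀ n : ℕ, N ≤ n → (∃ m : ℤ, (n : ℝ) * θ = (m : ℝ) + lam) →
      ‖((∑ k ∈ Finset.range (n + 1), qPochC q n * (q : ℂ) ^ (k ^ 2) *
            Complex.exp (((2 * Real.pi * n * k * θ : ℝ) : ℂ) * Complex.I) *
            (-(z ^ 2)⁻¹) ^ k / (qPochC q k * qPochC q (n - k))) -
          ramanujanAq q (Complex.exp (((2 * Real.pi * lam : ℝ) : ℂ) * Complex.I) *
            (z ^ 2)⁻¹))‖ ≤
        6 * (ramanujanAqR q (-((‖z‖ ^ 2)⁻¹)) / qPochInf q) *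
          (q ^ ((n : ℝ) / 2) + q ^ ((n / 2) ^ 2) / ‖z‖ ^ (2 * (n / 2))) := by
  refine ⟨0, fun n _ ⟨M, hM⟩ => ?_⟩
  set w := Complex.exp (((2 * Real.pi * lam : ℝ) : ℂ) * Complex.I) * (z ^ 2)⁻¹
  have hw : ‖w‖ = (‖z‖ ^ 2)⁻¹ := by
    rw [norm_mul, Complex.norm_exp_ofReal_mul_I, one_mul, norm_inv, norm_pow]
  have hx : 0 ≤ (‖z‖ ^ 2)⁻¹ := by positivity
  set A := ∑' k, aqMajorant q (‖z‖ ^ 2)⁻¹ k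
  have hC : 0 ≤ A / qPochInf q :=
    div_nonneg (tsum_nonneg (aqMajorant_nonneg hq0.le hq1 hx)) (qPochInf_pos hq0.le hq1).le
  simp only [cexp_two_pi_mul_I_eq_pow hM, qBinomial_term_eq_aqTerm_mul_qPochQuot hq0.le hq1]
  rw [ramanujanAqR_neg_eq_tsum_aqMajorant]
  calc _ ≤ ∑ k ∈ range (n + 1), aqMajorant q ‖w‖ k * (1 - qPochQuot q n k) +
          ∑' k, aqMajorant q ‖w‖ (k + (n + 1)) :=
        norm_sum_aqTerm_mul_qPochQuot_sub_le hq0.le hq1 w n (n + 1)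
    _ ≤ ∑ k ∈ range (n / 2 + 1), aqMajorant q ‖w‖ k * (1 - qPochQuot q n k) +
          ∑' k, aqMajorant q ‖w‖ (k + (n / 2 + 1)) :=
        antitone_sum_range_mul_add_tsum (summable_aqMajorant hq0.le hq1 (norm_nonneg w))
          (aqMajorant_nonneg hq0.le hq1 (norm_nonneg w))
          (fun k => sub_le_self _ (qPochQuot_nonneg hq0.le hq1 n k)) (by omega)
    _ ≤ q ^ ((n : ℝ) / 2) * (A / qPochInf q) +
          q ^ ((n / 2) ^ 2) * ((‖z‖ ^ 2)⁻¹) ^ (n / 2) * (A / qPochInf q) := by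
        rw [hw]
        exact add_le_add (sum_aqMajorant_mul_one_sub_qPochQuot_le hq0.le hq1 hx n)
          (tsum_aqMajorant_add_le hq0.le hq1 hx (n / 2))
    _ ≤ _ := by
        rw [div_eq_mul_inv _ (‖z‖ ^ (2 * _)), pow_mul, ← inv_pow (‖z‖ ^ 2) (n / 2)]
        have : 0 ≤ q ^ ((n : ℝ) / 2) := Real.rpow_nonneg hq0.le _
        have : 0 ≤ q ^ ((n / 2) ^ 2) * ((‖z‖ ^ 2)⁻¹) ^ (n / 2) := by positivity
        nlinarith

/-- case 2 of the theorem for the Ismail–Masson polynomials, `τ = 0`: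
there exists `N` such that for every `n ≥ N` with `nθ - λ ∈ ℤ`,
`|∑_{k=0}^n (q;q)_n q^{k²} e^{2πinkθ} (-z^{-2})^k / ((q;q)_k (q;q)_{n-k})
   - A_q(e^{2πiλ} z^{-2})|
  ≤ 6 (A_q(-|z|^{-2})/(q;q)_∞) (q^{n/2} + q^{⌊n/2⌋²}/|z|^{2⌊n/2⌋})`. -/
theorem stmt17 (q : ℝ) (hq0 : 0 < q) (hq1 : q < 1) (θ : ℝ) (z : ℂ) (hz : z ≠ 0)
    (lam : ℝ) :
    ∃ N : ℕ, ∀ n : ℕ, N ≤ n → (∃ m : ℤ, (n : ℝ) * θ = (m : ℝ) + lam) →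
      ‖((∑ k ∈ Finset.range (n + 1), qPochC q n * (q : ℂ) ^ (k ^ 2) *
            Complex.exp (((2 * Real.pi * n * k * θ : ℝ) : ℂ) * Complex.I) *
            (-(z ^ 2)⁻¹) ^ k / (qPochC q k * qPochC q (n - k))) -
          ramanujanAq q (Complex.exp (((2 * Real.pi * lam : ℝ) : ℂ) * Complex.I) *
            (z ^ 2)⁻¹))‖ ≤
        6 * (ramanujanAqR q (-((‖z‖ ^ 2)⁻¹)) / qPochInf q) *
          (q ^ ((n : ℝ) / 2) + q ^ ((n / 2) ^ 2) / ‖z‖ ^ (2 * (n / 2))) :=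
  stmt17_general q hq0 hq1 θ z lam
end
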